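/- arXiv:1311.2851 — 2 statements merged into one kernel-verified Lean document; each statement's English description precedes it below -/
import Mathlib

section
/- If X₁, …, Xₙ are i.i.d. nonnegative random variables whose common distribution is light-everywhere (survival function submultiplicative), then E[min(X₁,…,Xₙ)] ≥ E[X₁]/n. -/
/-!
By the layer-cake formula, `E[X₁] = ∫₀^∞ S(t) dt` where `S(t) = P(X₁ > t)`, and by independence
the minimum has survival function `S(t)^n`, so `E[min Xᵢ] = ∫₀^∞ S(t)^n dt`. Submultiplicativity
gives `S(n t) ≤ S(t)^n`, and the substitution `t ↦ n t` turns `∫₀^∞ S(n t) dt` into `E[X₁] / n`.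
-/

open MeasureTheory Set

theorem apply_nat_mul_le_pow_of_submultiplicative {S : ℝ → ℝ}
    (hmul : ∀ a b, 0 ≤ a → 0 ≤ b → S (a + b) ≤ S a * S b) {t : ℝ} (ht : 0 ≤ t) (hSt : 0 ≤ S t)
    {k : ℕ} (hk : k ≠ 0) : S (k * t) ≤ S t ^ k := by
  induction k, Nat.one_le_iff_ne_zero.mpr hk using Nat.le_induction with
  | base => simp
  | succ k _ ih =>
    calc S ((k + 1 : ℕ) * t) = S (k * t + t) := by push_cast; ring_nf
      _ ≤ S (k * t) * S t := hmul _ _ (by positivity) ht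
      _ ≤ S t ^ k * S t := mul_le_mul_of_nonneg_right (ih (by omega)) hSt
      _ = S t ^ (k + 1) := (pow_succ _ _).symm

theorem setIntegral_Ioi_le_mul_setIntegral_pow_of_submultiplicative {S : ℝ → ℝ}
    (hS : ∀ t, 0 ≤ S t) (hmul : ∀ a b, 0 ≤ a → 0 ≤ b → S (a + b) ≤ S a * S b)
    {n : ℕ} (hn : n ≠ 0) (hint : IntegrableOn (fun t ↦ S t ^ n) (Ioi 0)) :
    ∫ t in Ioi 0, S t ≤ n * ∫ t in Ioi 0, S t ^ n := by
  have hn' : (0 : ℝ) < n := by positivity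
  calc ∫ t in Ioi 0, S t = n * ∫ t in Ioi 0, S (n * t) := by
        simpa using (integral_comp_mul_left_Ioi' S 0 hn').symm
    _ ≤ n * ∫ t in Ioi 0, S t ^ n := by
        refine mul_le_mul_of_nonneg_left ?_ hn'.le
        refine integral_mono_of_nonneg (ae_of_all _ fun t ↦ hS _) hint ?_
        filter_upwards [ae_restrict_mem measurableSet_Ioi] with t ht
        exact apply_nat_mul_le_pow_of_submultiplicative hmul ht.le (hS t) hn

theorem MeasureTheory.Integrable.integrableOn_measureReal_lt {α : Type*} [MeasurableSpace α]
    {μ : Measure α} {f : α → ℝ} (hf : Integrable f μ) (hf0 : 0 ≤ᵐ[μ] f) :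
    IntegrableOn (fun t ↦ μ.real {a | t < f a}) (Ioi 0) := by
  refine integrable_toReal_of_lintegral_ne_top ?_ ?_
  · refine (Antitone.measurable fun (s t : ℝ) hst ↦ ?_).aemeasurable
    exact measure_mono fun a (h : t < f a) ↦ hst.trans_lt h
  · rw [← lintegral_eq_lintegral_meas_lt μ hf0 hf.aemeasurable]
    exact hf.lintegral_lt_top.ne

theorem setOf_lt_ciInf_eq_iInter {ι α : Type*} [Finite ι] [Nonempty ι] (X : ι → α → ℝ) (t : ℝ) :
    {a | t < ⨅ i, X i a} = ⋂ i, {a | t < X i a} := by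
  ext a
  obtain ⟨j, hj⟩ := exists_eq_ciInf_of_finite (f := fun i ↦ X i a)
  simp only [mem_ofPred_eq, mem_iInter, ← hj]
  exact ⟨fun h i ↦ h.trans_le (hj ▸ ciInf_le (Finite.bddBelow_range _) i), fun h ↦ h j⟩

theorem ProbabilityTheory.iIndepFun.measure_lt_ciInf {Ω ι : Type*} [MeasurableSpace Ω]
    {μ : Measure Ω} [Fintype ι] [Nonempty ι] {X : ι → Ω → ℝ} (hX : iIndepFun X μ) (t : ℝ) :
    μ {ω | t < ⨅ i, X i ω} = ∏ i, μ {ω | t < X i ω} := by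
  rw [setOf_lt_ciInf_eq_iInter]
  exact hX.meas_iInter fun i ↦ ⟨Ioi t, measurableSet_Ioi, rfl⟩

theorem stmt_2_general {Ω : Type*} [MeasurableSpace Ω] (μ : Measure Ω) [IsProbabilityMeasure μ]
    (n : ℕ) (hn : 0 < n) (X : Fin n → Ω → ℝ)
    (hindep : ProbabilityTheory.iIndepFun X μ)
    (hident : ∀ i, Measure.map (X i) μ = Measure.map (X ⟨0, hn⟩) μ)
    (hnonneg : ∀ i ω, 0 ≤ X i ω)
    (hint : ∀ i, Integrable (X i) μ)
    (hlight : ∀ a b : ℝ, 0 ≤ a → 0 ≤ b →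
      (μ {ω | a + b < X ⟨0, hn⟩ ω}).toReal ≤
        (μ {ω | a < X ⟨0, hn⟩ ω}).toReal * (μ {ω | b < X ⟨0, hn⟩ ω}).toReal) :
    ∫ ω, (⨅ i, X i ω) ∂μ ≥ (∫ ω, X ⟨0, hn⟩ ω ∂μ) / n := by
  set i₀ : Fin n := ⟨0, hn⟩
  have : Nonempty (Fin n) := ⟨i₀⟩
  have htail (i : Fin n) (t : ℝ) : μ {ω | t < X i ω} = μ {ω | t < X i₀ ω} := by
    have h := congrArg (· (Ioi t)) (hident i)
    simp only [Measure.map_apply_of_aemeasurable (hint _).aemeasurable measurableSet_Ioi] at h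
    exact h
  have hmin_tail (t : ℝ) : μ.real {ω | t < ⨅ i, X i ω} = μ.real {ω | t < X i₀ ω} ^ n := by
    simp [measureReal_def, hindep.measure_lt_ciInf, htail]
  have hmin_nonneg : 0 ≤ᵐ[μ] fun ω ↦ ⨅ i, X i ω := ae_of_all _ fun ω ↦ le_ciInf (hnonneg · ω)
  have hmin_int : Integrable (fun ω ↦ ⨅ i, X i ω) μ := by
    refine (hint i₀).mono' (AEMeasurable.iInf fun i ↦ (hint i).aemeasurable).aestronglyMeasurable ?_
    filter_upwards [hmin_nonneg] with ω hω
    rw [Real.norm_of_nonneg hω]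
    exact ciInf_le (Finite.bddBelow_range _) i₀
  rw [ge_iff_le, div_le_iff₀ (by positivity), mul_comm,
    (hint i₀).integral_eq_integral_meas_lt (ae_of_all _ (hnonneg i₀)),
    hmin_int.integral_eq_integral_meas_lt hmin_nonneg]
  simp only [hmin_tail]
  refine setIntegral_Ioi_le_mul_setIntegral_pow_of_submultiplicative
    (S := fun t ↦ μ.real {ω | t < X i₀ ω}) (fun t ↦ measureReal_nonneg) hlight hn.ne' ?_
  simpa only [hmin_tail] using hmin_int.integrableOn_measureReal_lt hmin_nonneg

/-- If `X₁,…,Xₙ` are i.i.d. nonnegative random variables with light-everywhere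
(submultiplicative survival) common distribution, then
`E[min(X₁,…,Xₙ)] ≥ E[X₁]/n`. -/
theorem stmt_2 {Ω : Type*} [MeasurableSpace Ω] (μ : Measure Ω) [IsProbabilityMeasure μ]
    (n : ℕ) (hn : 0 < n) (X : Fin n → Ω → ℝ)
    (hmeas : ∀ i, Measurable (X i))
    (hindep : ProbabilityTheory.iIndepFun X μ)
    (hident : ∀ i, Measure.map (X i) μ = Measure.map (X ⟨0, hn⟩) μ)
    (hnonneg : ∀ i ω, 0 ≤ X i ω)
    (hint : ∀ i, Integrable (X i) μ)
    (hlight : ∀ a b : ℝ, 0 ≤ a → 0 ≤ b →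
      (μ {ω | a + b < X ⟨0, hn⟩ ω}).toReal ≤
        (μ {ω | a < X ⟨0, hn⟩ ω}).toReal * (μ {ω | b < X ⟨0, hn⟩ ω}).toReal) :
    ∫ ω, (⨅ i, X i ω) ∂μ ≥ (∫ ω, X ⟨0, hn⟩ ω ∂μ) / n :=
  stmt_2_general μ n hn X hindep hident hnonneg hint hlight
end

section
/- The sum of finitely many independent nonnegative random variables, each light-everywhere, is light-everywhere: if X₁,…,Xₘ are independent with P(Xᵢ > a+b) ≤ P(Xᵢ > a)·P(Xᵢ > b) for all i and all a, b ≥ 0, then Y = X₁ + ⋯ + Xₘ satisfies P(Y > a+b) ≤ P(Y > a)·P(Y > b) for all a, b ≥ 0. -/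
open MeasureTheory ProbabilityTheory

/-!
Split the event `{a + b < X + Y}` according to whether `X ≤ a`, `Y ≤ b`, or neither.
On `{X > a, Y > b}` independence gives the product `P(X > a) P(Y > b)`. On `{X ≤ a}`, conditioning
on `X = x` and using lightness of `Y` at `(a - x, b)` gives
`P(a + b < X + Y, X ≤ a) ≤ P(a < X + Y, X ≤ a) P(Y > b)`, and symmetrically on `{Y ≤ b}`.
Since `Y ≥ 0`, `P(a < X + Y) = P(X > a) + P(a < X + Y, X ≤ a)`, so the three bounds add up to at
most `P(a < X + Y) P(b < X + Y)`. Induction on the number of summands finishes the proof.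
-/

section

variable {Ω : Type*} [MeasurableSpace Ω]

def IsLightEverywhere (μ : Measure Ω) (X : Ω → ℝ) : Prop :=
  ∀ a b : ℝ, 0 ≤ a → 0 ≤ b → μ {ω | a + b < X ω} ≤ μ {ω | a < X ω} * μ {ω | b < X ω}

lemma isLightEverywhere_iff_toReal (μ : Measure Ω) [IsFiniteMeasure μ] (X : Ω → ℝ) :
    IsLightEverywhere μ X ↔ ∀ a b : ℝ, 0 ≤ a → 0 ≤ b →
      (μ {ω | a + b < X ω}).toReal ≤ (μ {ω | a < X ω}).toReal * (μ {ω | b < X ω}).toReal := by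
  refine forall₄_congr fun a b _ _ => ?_
  rw [← ENNReal.toReal_mul, ENNReal.toReal_le_toReal (measure_ne_top _ _)
    (ENNReal.mul_ne_top (measure_ne_top _ _) (measure_ne_top _ _))]

lemma isLightEverywhere_const (μ : Measure Ω) [IsProbabilityMeasure μ] (c : ℝ) :
    IsLightEverywhere μ (fun _ => c) := by
  intro a b ha hb
  by_cases h : a + b < c
  · simp [h, show a < c by linarith, show b < c by linarith]
  · simp [h]

lemma measure_lt_add_eq_add (μ : Measure Ω) {X Y : Ω → ℝ} (hX : Measurable X)
    (hY : Measurable Y) (hYn : ∀ ω, 0 ≤ Y ω) (a : ℝ) :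
    μ {ω | a < X ω + Y ω} = μ {ω | a < X ω} + μ {ω | a < X ω + Y ω ∧ X ω ≤ a} := by
  have hm : MeasurableSet {ω | a < X ω + Y ω ∧ X ω ≤ a} :=
    (measurableSet_lt measurable_const (hX.add hY)).inter (measurableSet_le hX measurable_const)
  rw [← measure_union _ hm]
  · congr 1
    ext ω
    have := hYn ω
    simp only [Set.mem_ofPred_eq, Set.mem_union]
    constructor
    · intro h
      exact (lt_or_ge a (X ω)).imp_right fun hXa => ⟨h, hXa⟩
    · rintro (h | ⟨h, -⟩) <;> linarith
  · exact Set.disjoint_left.mpr fun ω h₁ h₂ => not_lt.mpr h₂.2 h₁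

section Pair

variable {μ : Measure Ω} [IsFiniteMeasure μ] {X Y : Ω → ℝ}

lemma ProbabilityTheory.IndepFun.measure_mem_eq_lintegral (hind : IndepFun X Y μ)
    (hX : Measurable X) (hY : Measurable Y) {S : Set (ℝ × ℝ)} (hS : MeasurableSet S) :
    μ {ω | (X ω, Y ω) ∈ S} = ∫⁻ x, μ {ω | (x, Y ω) ∈ S} ∂(μ.map X) := by
  change μ ((fun ω => (X ω, Y ω)) ⁻¹' S) = ∫⁻ x, μ (Y ⁻¹' (Prod.mk x ⁻¹' S)) ∂(μ.map X)
  rw [← Measure.map_apply (hX.prodMk hY) hS,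
    (indepFun_iff_map_prod_eq_prod_map_map hX.aemeasurable hY.aemeasurable).mp hind,
    Measure.prod_apply hS]
  refine lintegral_congr fun x => ?_
  exact Measure.map_apply hY (measurable_prodMk_left hS)

lemma IsLightEverywhere.measure_lt_add_and_le_le_mul (hYl : IsLightEverywhere μ Y)
    (hX : Measurable X) (hY : Measurable Y) (hind : IndepFun X Y μ) {a b : ℝ} (hb : 0 ≤ b) :
    μ {ω | a + b < X ω + Y ω ∧ X ω ≤ a} ≤
      μ {ω | a < X ω + Y ω ∧ X ω ≤ a} * μ {ω | b < Y ω} := by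
  have hS : ∀ c, MeasurableSet {p : ℝ × ℝ | c < p.1 + p.2 ∧ p.1 ≤ a} := fun c =>
    (measurableSet_lt measurable_const (measurable_fst.add measurable_snd)).inter
      (measurableSet_le measurable_fst measurable_const)
  have slice : ∀ x : ℝ, μ {ω | a + b < x + Y ω ∧ x ≤ a} ≤
      μ {ω | a < x + Y ω ∧ x ≤ a} * μ {ω | b < Y ω} := by
    intro x
    by_cases hx : x ≤ a
    · have h := hYl (a - x) b (sub_nonneg.mpr hx) hb
      have e₁ : {ω | a + b < x + Y ω} = {ω | a - x + b < Y ω} := by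
        ext; simp only [Set.mem_ofPred_eq]; constructor <;> intro <;> linarith
      have e₂ : {ω | a < x + Y ω} = {ω | a - x < Y ω} := by
        ext; simp only [Set.mem_ofPred_eq]; constructor <;> intro <;> linarith
      simpa only [hx, and_true, e₁, e₂] using h
    · simp [hx]
  calc μ {ω | a + b < X ω + Y ω ∧ X ω ≤ a}
      = ∫⁻ x, μ {ω | a + b < x + Y ω ∧ x ≤ a} ∂(μ.map X) :=
        hind.measure_mem_eq_lintegral hX hY (hS _)
    _ ≤ ∫⁻ x, μ {ω | a < x + Y ω ∧ x ≤ a} * μ {ω | b < Y ω} ∂(μ.map X) :=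
        lintegral_mono slice
    _ = μ {ω | a < X ω + Y ω ∧ X ω ≤ a} * μ {ω | b < Y ω} := by
        rw [lintegral_mul_const' _ _ (measure_ne_top _ _)]
        exact congrArg (· * _) (hind.measure_mem_eq_lintegral hX hY (hS a)).symm

lemma IsLightEverywhere.add (hXl : IsLightEverywhere μ X) (hYl : IsLightEverywhere μ Y)
    (hX : Measurable X) (hY : Measurable Y) (hind : IndepFun X Y μ)
    (hXn : ∀ ω, 0 ≤ X ω) (hYn : ∀ ω, 0 ≤ Y ω) :
    IsLightEverywhere μ (X + Y) := by
  intro a b ha hb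
  simp only [Pi.add_apply]
  set p := μ {ω | a < X ω}
  set q := μ {ω | a < X ω + Y ω ∧ X ω ≤ a}
  set r := μ {ω | b < Y ω}
  set s := μ {ω | b < X ω + Y ω ∧ Y ω ≤ b}
  have hq : μ {ω | a + b < X ω + Y ω ∧ X ω ≤ a} ≤ q * r :=
    hYl.measure_lt_add_and_le_le_mul hX hY hind hb
  have hs : μ {ω | a + b < X ω + Y ω ∧ Y ω ≤ b} ≤ s * p := by
    have h := hXl.measure_lt_add_and_le_le_mul hY hX hind.symm (a := b) ha
    simp_rw [add_comm (Y _) (X _), add_comm b a] at h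
    exact h
  have hpr : μ ({ω | a < X ω} ∩ {ω | b < Y ω}) = p * r :=
    hind.measure_inter_preimage_eq_mul _ _ measurableSet_Ioi measurableSet_Ioi
  have hcover : {ω | a + b < X ω + Y ω} ⊆ {ω | a + b < X ω + Y ω ∧ X ω ≤ a} ∪
      {ω | a + b < X ω + Y ω ∧ Y ω ≤ b} ∪ ({ω | a < X ω} ∩ {ω | b < Y ω}) := by
    intro ω h
    by_cases hXa : X ω ≤ a
    · exact .inl (.inl ⟨h, hXa⟩)
    by_cases hYb : Y ω ≤ b
    · exact .inl (.inr ⟨h, hYb⟩)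
    exact .inr ⟨not_le.mp hXa, not_le.mp hYb⟩
  calc μ {ω | a + b < X ω + Y ω}
      ≤ μ {ω | a + b < X ω + Y ω ∧ X ω ≤ a} + μ {ω | a + b < X ω + Y ω ∧ Y ω ≤ b} +
          μ ({ω | a < X ω} ∩ {ω | b < Y ω}) :=
        (measure_mono hcover).trans <| (measure_union_le _ _).trans <|
          add_le_add_left (measure_union_le _ _) _
    _ ≤ q * r + s * p + p * r := by gcongr; exact hpr.le
    _ ≤ (p + q) * (r + s) := by
        calc q * r + s * p + p * r ≤ q * r + s * p + p * r + q * s := le_self_add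
          _ = (p + q) * (r + s) := by ring
    _ = μ {ω | a < X ω + Y ω} * μ {ω | b < X ω + Y ω} := by
        have hrs := measure_lt_add_eq_add μ hY hX hXn b
        simp_rw [add_comm (Y _) (X _)] at hrs
        rw [measure_lt_add_eq_add μ hX hY hYn, hrs]

end Pair

lemma IsLightEverywhere.finset_sum {μ : Measure Ω} [IsProbabilityMeasure μ] {ι : Type*}
    {X : ι → Ω → ℝ} (hl : ∀ i, IsLightEverywhere μ (X i))
    (hmeas : ∀ i, Measurable (X i)) (hindep : iIndepFun X μ) (hnonneg : ∀ i ω, 0 ≤ X i ω)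
    (s : Finset ι) : IsLightEverywhere μ (∑ i ∈ s, X i) := by
  classical
  induction s using Finset.induction_on with
  | empty => rw [Finset.sum_empty]; exact isLightEverywhere_const μ 0
  | insert j s hj ih =>
    rw [Finset.sum_insert hj, add_comm]
    have hsum : Measurable (∑ i ∈ s, X i) := by
      rw [Finset.sum_fn]; exact s.measurable_sum fun i _ => hmeas i
    refine ih.add (hl j) hsum (hmeas j) (hindep.indepFun_finsetSum_of_notMem hmeas hj)
      (fun ω => ?_) (hnonneg j)
    simpa only [Finset.sum_apply] using s.sum_nonneg fun i _ => hnonneg i ω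

end

/-- The sum of finitely many independent nonnegative light-everywhere random
variables is light-everywhere. -/
theorem stmt_9 {Ω : Type*} [MeasurableSpace Ω] (μ : Measure Ω) [IsProbabilityMeasure μ]
    (m : ℕ) (X : Fin m → Ω → ℝ) (hmeas : ∀ i, Measurable (X i))
    (hindep : ProbabilityTheory.iIndepFun X μ)
    (hnonneg : ∀ i ω, 0 ≤ X i ω)
    (hlight : ∀ i, ∀ a b : ℝ, 0 ≤ a → 0 ≤ b →
      (μ {ω | a + b < X i ω}).toReal ≤
        (μ {ω | a < X i ω}).toReal * (μ {ω | b < X i ω}).toReal) :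
    ∀ a b : ℝ, 0 ≤ a → 0 ≤ b →
      (μ {ω | a + b < ∑ i, X i ω}).toReal ≤
        (μ {ω | a < ∑ i, X i ω}).toReal * (μ {ω | b < ∑ i, X i ω}).toReal := by
  have h := IsLightEverywhere.finset_sum
    (fun i => (isLightEverywhere_iff_toReal μ (X i)).mpr (hlight i)) hmeas hindep hnonneg
    Finset.univ
  simpa only [isLightEverywhere_iff_toReal, Finset.sum_apply] using h
end
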